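/- arXiv:1009.5435 — 4 statements merged into one kernel-verified Lean document; each statement's English description precedes it below -/
import Mathlib

section
/- A matching M in a graph G is uniquely restricted (i.e., it is the unique perfect matching of the subgraph induced by the vertices it saturates) if and only if G contains no M-alternating cycle, i.e., no cycle whose edges alternate between M and E(G)\M. -/
open SimpleGraph

variable {V : Type*}

/-- `M` is a matching in `G`: a set of edges of `G`, pairwise not sharing a vertex. -/
def IsMatchingIn (G : SimpleGraph V) (M : Set (Sym2 V)) : Prop :=
  M ⊆ G.edgeSet ∧ ∀ e ∈ M, ∀ f ∈ M, e ≠ f → ∀ v : V, ¬(v ∈ e ∧ v ∈ f)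

/-- The set of vertices saturated by the edge set `M`. -/
def sat (M : Set (Sym2 V)) : Set V := {v | ∃ e ∈ M, v ∈ e}

/-- A list of edges alternates w.r.t. `M` if consecutive edges alternate membership in `M`. -/
def Alternates (M : Set (Sym2 V)) (l : List (Sym2 V)) : Prop :=
  l.Chain' (fun e f => (e ∈ M ↔ f ∉ M))

/-- An `M`-alternating cycle: an even cycle whose edges alternate between `M` and `E \ M`. -/
def IsAltCycle (G : SimpleGraph V) (M : Set (Sym2 V)) {v : V} (c : G.Walk v v) : Prop :=
  c.IsCycle ∧ c.edges.length % 2 = 0 ∧ Alternates M c.edges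

/-- `M` is uniquely restricted: it is the unique perfect matching of the subgraph of `G`
induced by the `M`-saturated vertices. -/
def UniquelyRestricted (G : SimpleGraph V) (M : Set (Sym2 V)) : Prop :=
  IsMatchingIn G M ∧ ∀ N : Set (Sym2 V), IsMatchingIn G N →
    (∀ e ∈ N, ∀ v ∈ e, v ∈ sat M) → sat N = sat M → N = M

/-- Arc relation of the digraph `D(G,M)` for a bipartite graph with class `X`:
an arc `x₁ → x₂` between distinct `M`-saturated `X`-vertices whenever
`(x₁, x₂') ∈ E \ M`, where `x₂'` is the `M`-partner of `x₂`. -/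
def DArc (G : SimpleGraph V) (M : Set (Sym2 V)) (X : Set V) (x₁ x₂ : V) : Prop :=
  x₁ ∈ X ∧ x₂ ∈ X ∧ x₁ ≠ x₂ ∧ (∃ y, s(x₁, y) ∈ M) ∧
    ∃ y, s(x₂, y) ∈ M ∧ s(x₁, y) ∈ G.edgeSet ∧ s(x₁, y) ∉ M

/-!
Two perfect matchings `M ≠ N` of the same vertex set differ along cycles: in the graph with
edge set `M ∆ N` every vertex has degree `0` or `2`, one edge from `M` and one from `N`, so any
cycle in it is `M`-alternating. Conversely, swapping `M` along an `M`-alternating cycle `C`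
gives a different perfect matching `M ∆ E(C)` of the same vertex set.

Both directions use alternation in its local form (at each vertex, two distinct cycle edges
differ in membership in `M`); for a cycle this amounts to alternation along the edge list
together with even length, the wrap-around at the base vertex being what forces the parity.
-/

open scoped symmDiff

theorem List.IsChain.getElem_iff_even_of_iff_not {α : Type*} {p : α → Prop} {l : List α}
    (hl : l.IsChain fun a b => p a ↔ ¬p b) {i : ℕ} (hi : i < l.length) :
    p l[i] ↔ (p (l[0]'(by omega)) ↔ Even i) := by
  induction i with
  | zero => simp
  | succ i ih =>
    have hstep := List.isChain_iff_getElem.1 hl i hi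
    have := ih (by omega)
    rw [Nat.even_add_one]
    tauto

namespace SimpleGraph

variable {G C : SimpleGraph V} {M : Set (Sym2 V)}

theorem Walk.IsCycle.eq_of_getVert_eq {u : V} {p : G.Walk u u} (hp : p.IsCycle) {a b : ℕ}
    (ha : a ≤ p.length) (hb : b ≤ p.length) (h : p.getVert a = p.getVert b) :
    a = b ∨ a = 0 ∧ b = p.length ∨ a = p.length ∧ b = 0 := by
  rcases Nat.eq_zero_or_pos a with rfl | ha0
  · rw [getVert_zero, eq_comm, hp.getVert_endpoint_iff hb] at h
    omega
  rcases Nat.eq_zero_or_pos b with rfl | hb0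
  · rw [getVert_zero, hp.getVert_endpoint_iff ha] at h
    omega
  exact .inl (hp.getVert_injOn ⟨ha0, ha⟩ ⟨hb0, hb⟩ h)

theorem fromEdgeSet_adj_iff_of_adj {x y : V} (h : G.Adj x y) :
    (fromEdgeSet M).Adj x y ↔ s(x, y) ∈ M := by
  simp [fromEdgeSet_adj, h.ne]

theorem IsCycles.exists_adj_mem_and_adj_not_mem (hC : C.IsCycles)
    (halt : C.IsAlternating (fromEdgeSet M)) {v w : V} (h : C.Adj v w) :
    ∃ y z, C.Adj v y ∧ s(v, y) ∈ M ∧ C.Adj v z ∧ s(v, z) ∉ M := by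
  obtain ⟨w', hww', hw'⟩ := hC.other_adj_of_adj h
  have := halt hww' h hw'
  rw [fromEdgeSet_adj_iff_of_adj h, fromEdgeSet_adj_iff_of_adj hw'] at this
  by_cases hw : s(v, w) ∈ M
  · exact ⟨w, w', h, hw, hw', this.1 hw⟩
  · exact ⟨w', w, hw', by tauto, h, hw⟩

end SimpleGraph

section AlternatingCycles

variable {G C : SimpleGraph V} {M N : Set (Sym2 V)} {u v a b : V}

theorem mem_sat_iff : v ∈ sat M ↔ ∃ w, s(v, w) ∈ M := by
  constructor
  · rintro ⟨e, he, hv⟩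
    obtain ⟨w, rfl⟩ := Sym2.mem_iff_exists.1 hv
    exact ⟨w, he⟩
  · rintro ⟨w, hw⟩
    exact ⟨_, hw, Sym2.mem_mk_left v w⟩

theorem isMatchingIn_iff :
    IsMatchingIn G M ↔ M ⊆ G.edgeSet ∧ ∀ ⦃v a b⦄, s(v, a) ∈ M → s(v, b) ∈ M → a = b := by
  refine and_congr_right fun _ =>
    ⟨fun h v a b ha hb => ?_, fun h e he f hf hef v ⟨hve, hvf⟩ => ?_⟩
  · by_contra hab
    exact h _ ha _ hb (fun heq => hab (Sym2.congr_right.1 heq)) v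
      ⟨Sym2.mem_mk_left _ _, Sym2.mem_mk_left _ _⟩
  · obtain ⟨a, rfl⟩ := Sym2.mem_iff_exists.1 hve
    obtain ⟨b, rfl⟩ := Sym2.mem_iff_exists.1 hvf
    exact hef (congrArg _ (h he hf))

theorem IsMatchingIn.eq_of_mem (hM : IsMatchingIn G M) (ha : s(v, a) ∈ M)
    (hb : s(v, b) ∈ M) : a = b :=
  (isMatchingIn_iff.1 hM).2 ha hb

theorem IsMatchingIn.symmDiff_edgeSet (hM : IsMatchingIn G M) (hC : C.IsCycles)
    (halt : C.IsAlternating (fromEdgeSet M)) (hCG : C ≤ G) :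
    IsMatchingIn G (M ∆ C.edgeSet) := by
  refine isMatchingIn_iff.2 ⟨?_, fun v a b ha hb => ?_⟩
  · rintro e (⟨he, -⟩ | ⟨he, -⟩)
    exacts [hM.1 he, edgeSet_mono hCG he]
  have hpartner {x y : V} (hxy : s(v, x) ∈ M) (hy : C.Adj v y) : C.Adj v x := by
    obtain ⟨x', -, hx', hx'M, -⟩ := hC.exists_adj_mem_and_adj_not_mem halt hy
    rwa [hM.eq_of_mem hxy hx'M]
  simp only [Set.mem_symmDiff, mem_edgeSet] at ha hb
  rcases ha with ⟨haM, haC⟩ | ⟨haC, haM⟩ <;> rcases hb with ⟨hbM, hbC⟩ | ⟨hbC, hbM⟩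
  · exact hM.eq_of_mem haM hbM
  · exact absurd (hpartner haM hbC) haC
  · exact absurd (hpartner hbM haC) hbC
  · by_contra hab
    have := halt hab haC hbC
    rw [fromEdgeSet_adj_iff_of_adj haC, fromEdgeSet_adj_iff_of_adj hbC] at this
    tauto

theorem sat_symmDiff_edgeSet (hC : C.IsCycles) (halt : C.IsAlternating (fromEdgeSet M)) :
    sat (M ∆ C.edgeSet) = sat M := by
  ext v
  simp only [mem_sat_iff, Set.mem_symmDiff, mem_edgeSet]
  constructor
  · rintro ⟨w, ⟨hw, -⟩ | ⟨hw, -⟩⟩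
    · exact ⟨w, hw⟩
    · obtain ⟨y, -, -, hy, -⟩ := hC.exists_adj_mem_and_adj_not_mem halt hw
      exact ⟨y, hy⟩
  · rintro ⟨w, hw⟩
    by_cases hwC : C.Adj v w
    · obtain ⟨-, z, -, -, hz, hzM⟩ := hC.exists_adj_mem_and_adj_not_mem halt hwC
      exact ⟨z, .inr ⟨hz, hzM⟩⟩
    · exact ⟨w, .inl ⟨hw, hwC⟩⟩

theorem mk_getVert_mem_iff_of_alternates {c : G.Walk u v} (halt : Alternates M c.edges)
    {i : ℕ} (hi : i < c.length) :
    s(c.getVert i, c.getVert (i + 1)) ∈ M ↔ (s(u, c.snd) ∈ M ↔ Even i) := by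
  have := halt.getElem_iff_even_of_iff_not (p := (· ∈ M)) (i := i) (by simpa using hi)
  simpa [Walk.getElem_edges] using this

theorem IsAltCycle.isAlternating {c : G.Walk u u} (hc : IsAltCycle G M c) :
    c.toSubgraph.spanningCoe.IsAlternating (fromEdgeSet M) := by
  obtain ⟨hcyc, heven, halt⟩ := hc
  intro x y z hyz hxy hxz
  rw [Subgraph.spanningCoe_adj] at hxy hxz
  rw [fromEdgeSet_adj_iff_of_adj hxy.adj_sub, fromEdgeSet_adj_iff_of_adj hxz.adj_sub]
  obtain ⟨i, hi_eq, hi⟩ := c.toSubgraph_adj_iff.1 hxy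
  obtain ⟨j, hj_eq, hj⟩ := c.toSubgraph_adj_iff.1 hxz
  have hij : i ≠ j := by
    rintro rfl
    exact hyz (Sym2.congr_right.1 (hi_eq.symm.trans hj_eq))
  have hx {k : ℕ} {w : V} (hk : s(c.getVert k, c.getVert (k + 1)) = s(x, w)) :
      c.getVert k = x ∨ c.getVert (k + 1) = x :=
    (Sym2.mem_iff.1 (hk ▸ Sym2.mem_mk_left x w)).imp Eq.symm Eq.symm
  have hparity : Even i ↔ ¬Even j := by
    rw [c.length_edges] at heven
    simp only [Nat.even_iff]
    rcases hx hi_eq with ha | ha <;> rcases hx hj_eq with hb | hb <;>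
      have := hcyc.eq_of_getVert_eq (by omega) (by omega) (ha.trans hb.symm) <;> omega
  have hpi := mk_getVert_mem_iff_of_alternates halt hi
  have hpj := mk_getVert_mem_iff_of_alternates halt hj
  rw [hi_eq] at hpi
  rw [hj_eq] at hpj
  tauto

theorem isAltCycle_of_isAlternating {c : G.Walk u u} (hc : c.IsCycle)
    (halt : c.toSubgraph.spanningCoe.IsAlternating (fromEdgeSet M)) : IsAltCycle G M c := by
  have h3 := hc.three_le_length
  have hadj {x y z : V} (hyz : y ≠ z) (hxy : c.toSubgraph.Adj x y)
      (hxz : c.toSubgraph.Adj x z) : s(x, y) ∈ M ↔ s(x, z) ∉ M := by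
    have := halt hyz hxy hxz
    rwa [fromEdgeSet_adj_iff_of_adj hxy.adj_sub, fromEdgeSet_adj_iff_of_adj hxz.adj_sub] at this
  have hchain : Alternates M c.edges := by
    refine List.isChain_iff_getElem.2 fun i hi => ?_
    rw [Walk.getElem_edges, Walk.getElem_edges, Sym2.eq_swap]
    rw [c.length_edges] at hi
    exact hadj (hc.getVert_sub_one_ne_getVert_add_one (i := i + 1) (by omega))
      (c.toSubgraph_adj_getVert (by omega)).symm (c.toSubgraph_adj_getVert (by omega))
  have hends := hadj hc.snd_ne_penultimate (c.toSubgraph_adj_snd hc.not_nil)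
    (c.toSubgraph_adj_penultimate hc.not_nil).symm
  have hlast := mk_getVert_mem_iff_of_alternates hchain (i := c.length - 1) (by omega)
  rw [Nat.sub_add_cancel (by omega), c.getVert_length, Sym2.eq_swap] at hlast
  have hodd : ¬Even (c.length - 1) := by tauto
  rw [Nat.even_iff] at hodd
  exact ⟨hc, by rw [c.length_edges]; omega, hchain⟩

theorem not_uniquelyRestricted_of_isAltCycle {c : G.Walk u u} (hc : IsAltCycle G M c) :
    ¬UniquelyRestricted G M := by
  rintro ⟨hM, huniq⟩
  have hC := hc.1.isCycles_spanningCoe_toSubgraph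
  have halt := hc.isAlternating
  have hsat := sat_symmDiff_edgeSet hC halt
  have hNM := huniq _ (hM.symmDiff_edgeSet hC halt c.toSubgraph.spanningCoe_le)
    (fun e he x hx => hsat ▸ ⟨e, he, hx⟩) hsat
  rw [symmDiff_eq_left, Set.bot_eq_empty, ← Set.not_nonempty_iff_eq_empty] at hNM
  exact hNM ⟨s(u, c.snd), c.toSubgraph_adj_snd hc.1.not_nil⟩

theorem isAlternating_fromEdgeSet_symmDiff (hM : IsMatchingIn G M) (hN : IsMatchingIn G N) :
    (fromEdgeSet (M ∆ N)).IsAlternating (fromEdgeSet M) := by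
  intro v w w' hww' hw hw'
  rw [fromEdgeSet_adj_iff_of_adj hw, fromEdgeSet_adj_iff_of_adj hw']
  simp only [fromEdgeSet_adj, Set.mem_symmDiff] at hw hw'
  refine ⟨fun hwM hw'M => hww' (hM.eq_of_mem hwM hw'M), fun hw'M => ?_⟩
  by_contra hwM
  exact hww' (hN.eq_of_mem (by tauto) (by tauto))

theorem isCycles_fromEdgeSet_symmDiff (hM : IsMatchingIn G M) (hN : IsMatchingIn G N)
    (hsat : sat N = sat M) : (fromEdgeSet (M ∆ N)).IsCycles := by
  rintro v ⟨w, hw⟩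
  simp only [mem_neighborSet, fromEdgeSet_adj, Set.mem_symmDiff] at hw
  have hv : v ∈ sat M := by
    rcases hw.1 with ⟨h, -⟩ | ⟨h, -⟩
    exacts [⟨_, h, Sym2.mem_mk_left _ _⟩, hsat ▸ ⟨_, h, Sym2.mem_mk_left _ _⟩]
  obtain ⟨a, ha⟩ := mem_sat_iff.1 hv
  obtain ⟨b, hb⟩ := mem_sat_iff.1 (hsat ▸ hv)
  have hab : a ≠ b := by
    rintro rfl
    rcases hw.1 with ⟨hwM, hwN⟩ | ⟨hwN, hwM⟩
    · exact hwN (hM.eq_of_mem ha hwM ▸ hb)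
    · exact hwM (hN.eq_of_mem hb hwN ▸ ha)
  suffices (fromEdgeSet (M ∆ N)).neighborSet v = {a, b} by rw [this, Set.ncard_pair hab]
  ext x
  simp only [mem_neighborSet, fromEdgeSet_adj, Set.mem_symmDiff, Set.mem_insert_iff,
    Set.mem_singleton_iff]
  constructor
  · rintro ⟨⟨hx, -⟩ | ⟨hx, -⟩, -⟩
    exacts [.inl (hM.eq_of_mem hx ha), .inr (hN.eq_of_mem hx hb)]
  · rintro (rfl | rfl)
    · exact ⟨.inl ⟨ha, fun h => hab (hN.eq_of_mem h hb)⟩, (hM.1 ha).ne⟩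
    · exact ⟨.inr ⟨hb, fun h => hab (hM.eq_of_mem ha h)⟩, (hN.1 hb).ne⟩

theorem exists_isAltCycle_of_ne [Finite V] (hM : IsMatchingIn G M) (hN : IsMatchingIn G N)
    (hsat : sat N = sat M) (hne : N ≠ M) : ∃ (v : V) (c : G.Walk v v), IsAltCycle G M c := by
  set H := fromEdgeSet (M ∆ N)
  have hHG : H ≤ G := by
    intro x y h
    rcases ((fromEdgeSet_adj _).1 h).1 with ⟨h, -⟩ | ⟨h, -⟩
    exacts [hM.1 h, hN.1 h]
  obtain ⟨x, y, he⟩ := Sym2.exists.1 (Set.symmDiff_nonempty.2 hne.symm)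
  have hxy : H.Adj x y := by
    refine (fromEdgeSet_adj _).2 ⟨he, ?_⟩
    rcases he with ⟨h, -⟩ | ⟨h, -⟩
    exacts [(hM.1 h).ne, (hN.1 h).ne]
  have hH := isCycles_fromEdgeSet_symmDiff hM hN hsat
  obtain ⟨c, hc, -⟩ := hH.exists_cycle_toSubgraph_verts_eq_connectedComponentSupp
    (c := H.connectedComponentMk x) rfl ⟨y, hxy⟩
  refine ⟨x, c.mapLe hHG, isAltCycle_of_isAlternating (hc.mapLe hHG) ?_⟩
  refine (isAlternating_fromEdgeSet_symmDiff hM hN).mono fun a b hab => ?_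
  rw [Subgraph.spanningCoe_adj, Walk.adj_toSubgraph_iff_mem_edges,
    Walk.edges_mapLe_eq_edges] at hab
  exact c.edges_subset_edgeSet hab

end AlternatingCycles

/-- `M` is uniquely restricted iff `G` contains no `M`-alternating cycle. -/
theorem stmt0 [Fintype V] (G : SimpleGraph V) (M : Set (Sym2 V))
    (hM : IsMatchingIn G M) :
    UniquelyRestricted G M ↔ ¬ ∃ (v : V) (c : G.Walk v v), IsAltCycle G M c := by
  refine ⟨fun hUR ⟨_, _, hc⟩ => not_uniquelyRestricted_of_isAltCycle hc hUR,
    fun hno => ⟨hM, fun N hN _ hsat => ?_⟩⟩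
  by_contra hne
  exact hno (exists_isAltCycle_of_ne hM hN hsat hne)
end

section
/- Let G = (X ∪ Y, E) be a bipartite graph with matching M, where for each matched vertex x ∈ X we write x' ∈ Y for its partner under M. Define the digraph D(G,M) with vertex set the X-endpoints of edges of M, and an arc from x₁ to x₂ whenever x₁ ≠ x₂ and (x₁, x₂') ∈ E \ M. Then M is uniquely restricted in G if and only if D(G,M) is acyclic. -/
open SimpleGraph

variable {V : Type*}

section Helpers
variable {G : SimpleGraph V} {M : Set (Sym2 V)}

lemma matching_eq (hM : IsMatchingIn G M) {e f : Sym2 V} {v : V}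
    (he : e ∈ M) (hf : f ∈ M) (hv : v ∈ e) (hv' : v ∈ f) : e = f := by
  by_contra hne
  exact hM.2 e he f hf hne v ⟨hv, hv'⟩

lemma no_loop (hM : IsMatchingIn G M) (v : V) : s(v, v) ∉ M := fun h =>
  G.irrefl (G.mem_edgeSet.mp (hM.1 h))

open Classical in
/-- Partner function for a matching. -/
noncomputable def PartnerFn (M : Set (Sym2 V)) (v : V) : V :=
  if h : ∃ y, s(v, y) ∈ M then h.choose else v

lemma partner_spec (hM : IsMatchingIn G M) {x y : V} (h : s(x, y) ∈ M) :
    PartnerFn M x = y := by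
  have hex : ∃ y, s(x, y) ∈ M := ⟨y, h⟩
  unfold PartnerFn
  rw [dif_pos hex]
  have h2 : s(x, hex.choose) ∈ M := hex.choose_spec
  have heq : s(x, hex.choose) = s(x, y) :=
    matching_eq hM h2 h (Sym2.mem_mk_left _ _) (Sym2.mem_mk_left _ _)
  rcases Sym2.eq_iff.mp heq with ⟨-, h4⟩ | ⟨h3, h4⟩
  · exact h4
  · subst h3; rw [h4] at h2; exact absurd h2 (no_loop hM _)

lemma sat_iff {x : V} : x ∈ sat M ↔ ∃ y, s(x, y) ∈ M := by
  constructor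
  · rintro ⟨e, he, hx⟩
    obtain ⟨y, rfl⟩ := Sym2.mem_iff_exists.mp hx
    exact ⟨y, he⟩
  · rintro ⟨y, hy⟩
    exact ⟨s(x, y), hy, Sym2.mem_mk_left _ _⟩

lemma partner_mem (hM : IsMatchingIn G M) {x : V} (h : x ∈ sat M) :
    s(x, PartnerFn M x) ∈ M := by
  obtain ⟨y, hy⟩ := sat_iff.mp h
  rwa [partner_spec hM hy]

lemma edge_eq (hM : IsMatchingIn G M) {e : Sym2 V} {x : V} (he : e ∈ M) (hx : x ∈ e) :
    e = s(x, PartnerFn M x) := by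
  obtain ⟨y, rfl⟩ := Sym2.mem_iff_exists.mp hx
  rw [partner_spec hM he]

lemma partner_invol (hM : IsMatchingIn G M) {x : V} (h : x ∈ sat M) :
    PartnerFn M (PartnerFn M x) = x :=
  partner_spec hM (by rw [Sym2.eq_swap]; exact partner_mem hM h)

lemma partner_unique_left (hM : IsMatchingIn G M) {x₁ x₂ y : V}
    (h1 : s(x₁, y) ∈ M) (h2 : s(x₂, y) ∈ M) : x₁ = x₂ := by
  have heq : s(x₁, y) = s(x₂, y) :=
    matching_eq hM h1 h2 (Sym2.mem_mk_right _ _) (Sym2.mem_mk_right _ _)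
  rcases Sym2.eq_iff.mp heq with ⟨h3, -⟩ | ⟨h3, h4⟩
  · exact h3
  · rw [h3, h4]

lemma transGen_chain {α : Type*} {r : α → α → Prop} {a b : α}
    (h : Relation.TransGen r a b) :
    ∃ n, 1 ≤ n ∧ ∃ z : ℕ → α, z 0 = a ∧ z n = b ∧ ∀ i < n, r (z i) (z (i + 1)) := by
  induction h with
  | @single c hab =>
    refine ⟨1, le_refl _, fun i => if i = 0 then a else c, by simp, by simp, ?_⟩
    intro i hi
    interval_cases i
    simpa using hab
  | @tail p q _ hpq ih =>
    obtain ⟨n, hn, z, hz0, hzn, harc⟩ := ih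
    refine ⟨n + 1, by omega, fun i => if i ≤ n then z i else q, by simp [hz0],
      by simp, ?_⟩
    intro i hi
    rcases Nat.lt_or_ge i n with h' | h'
    · have e1 : (if i ≤ n then z i else q) = z i := if_pos (by omega)
      have e2 : (if i + 1 ≤ n then z (i + 1) else q) = z (i + 1) := if_pos (by omega)
      simp only [e1, e2]
      exact harc i h'
    · have hin : i = n := by omega
      have e1 : (if i ≤ n then z i else q) = p := by rw [hin, if_pos (le_refl n), hzn]
      have e2 : (if i + 1 ≤ n then z (i + 1) else q) = q := by
        rw [hin]; exact if_neg (by omega)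
      simp only [e1, e2]
      exact hpq

lemma exists_min_cycle {α : Type*} {r : α → α → Prop} {x : α}
    (h : Relation.TransGen r x x) :
    ∃ (n : ℕ) (z : ℕ → α), 1 ≤ n ∧ z n = z 0 ∧ (∀ i < n, r (z i) (z (i + 1))) ∧
      ∀ i j, i < n → j < n → z i = z j → i = j := by
  classical
  have hQ : ∃ n, 1 ≤ n ∧ ∃ z : ℕ → α, z n = z 0 ∧ ∀ i < n, r (z i) (z (i + 1)) := by
    obtain ⟨n, hn, z, hz0, hzn, harc⟩ := transGen_chain h
    exact ⟨n, hn, z, by rw [hz0, hzn], harc⟩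
  obtain ⟨hn1, z, hzc, harc⟩ := Nat.find_spec hQ
  refine ⟨Nat.find hQ, z, hn1, hzc, harc, ?_⟩
  intro i j hi hj heq
  by_contra hne
  wlog hij : i < j generalizing i j
  · exact this j i hj hi heq.symm (Ne.symm hne) (by omega)
  have hQm : 1 ≤ j - i ∧ ∃ z' : ℕ → α, z' (j - i) = z' 0 ∧
      ∀ k < j - i, r (z' k) (z' (k + 1)) := by
    refine ⟨by omega, fun k => z (i + k), ?_, ?_⟩
    · show z (i + (j - i)) = z (i + 0)
      rw [Nat.add_sub_cancel' (by omega), Nat.add_zero, ← heq]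
    · intro k hk
      show r (z (i + k)) (z (i + (k + 1)))
      have hh : i + (k + 1) = i + k + 1 := by omega
      rw [hh]
      exact harc (i + k) (by omega)
  exact Nat.find_min hQ (by omega) hQm

end Helpers

lemma ur_to_acyclic (G : SimpleGraph V) (X : Set V) (M : Set (Sym2 V))
    (hbip : ∀ v w, G.Adj v w → (v ∈ X ↔ w ∉ X)) (hM : IsMatchingIn G M)
    (hUR : UniquelyRestricted G M) :
    ∀ x, ¬ Relation.TransGen (DArc G M X) x x := by
  intro x hx
  obtain ⟨n, z, hn1, hzc, harc, hinj⟩ := exists_min_cycle hx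
  set P := PartnerFn M with hPdef
  have harcd : ∀ i < n, z i ∈ X ∧ z (i + 1) ∈ X ∧ z i ≠ z (i + 1) ∧ z i ∈ sat M ∧
      s(z i, P (z (i + 1))) ∈ G.edgeSet ∧ s(z i, P (z (i + 1))) ∉ M := by
    intro i hi
    obtain ⟨h1, h2, h3, ⟨y₀, hy₀⟩, y, hyM, hyE, hyNM⟩ := harc i hi
    have hy : P (z (i + 1)) = y := partner_spec hM hyM
    rw [hy]
    exact ⟨h1, h2, h3, sat_iff.mpr ⟨y₀, hy₀⟩, hyE, hyNM⟩
  have hsatz : ∀ i ≤ n, z i ∈ sat M := by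
    intro i hi
    rcases Nat.lt_or_ge i n with h | h
    · exact (harcd i h).2.2.2.1
    · have : i = n := by omega
      rw [this, hzc]
      exact (harcd 0 (by omega)).2.2.2.1
  have hMz : ∀ i ≤ n, s(z i, P (z i)) ∈ M := fun i hi => partner_mem hM (hsatz i hi)
  have hXz : ∀ i ≤ n, z i ∈ X := by
    intro i hi
    rcases Nat.lt_or_ge i n with h | h
    · exact (harcd i h).1
    · have : i = n := by omega
      rw [this, hzc]
      exact (harcd 0 (by omega)).1
  have hPXz : ∀ i ≤ n, P (z i) ∉ X := fun i hi =>
    (hbip (z i) (P (z i)) (G.mem_edgeSet.mp (hM.1 (hMz i hi)))).mp (hXz i hi)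
  have hinj1 : ∀ i j, i < n → j < n → z (i + 1) = z (j + 1) → i = j := by
    intro i j hi hj heq
    rcases Nat.lt_or_ge (i + 1) n with h | h <;> rcases Nat.lt_or_ge (j + 1) n with h' | h'
    · have := hinj (i + 1) (j + 1) h h' heq; omega
    · have hj1 : j + 1 = n := by omega
      rw [hj1, hzc] at heq
      have := hinj (i + 1) 0 h (by omega) heq; omega
    · have hi1 : i + 1 = n := by omega
      rw [hi1, hzc] at heq
      have := hinj 0 (j + 1) (by omega) h' heq; omega
    · omega
  have hPinj : ∀ i j, i < n → j < n → P (z (i + 1)) = P (z (j + 1)) → i = j := by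
    intro i j hi hj heq
    apply hinj1 i j hi hj
    have h2 := hMz (j + 1) (by omega)
    rw [← heq] at h2
    exact partner_unique_left hM (hMz (i + 1) (by omega)) h2
  set N : Set (Sym2 V) :=
    {e | (e ∈ M ∧ ∀ i < n, z i ∉ e) ∨ ∃ i, i < n ∧ e = s(z i, P (z (i + 1)))} with hNdef
  have hnewN : ∀ i < n, s(z i, P (z (i + 1))) ∈ N := fun i hi => Or.inr ⟨i, hi, rfl⟩
  have holdP : ∀ (e : Sym2 V), e ∈ M → ∀ j, j < n → P (z (j + 1)) ∈ e →
      ∃ i < n, z i ∈ e := by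
    intro e heM j hj hPe
    have he2 : e = s(P (z (j + 1)), PartnerFn M (P (z (j + 1)))) := edge_eq hM heM hPe
    have hinv : PartnerFn M (P (z (j + 1))) = z (j + 1) :=
      partner_invol hM (hsatz (j + 1) (by omega))
    rw [hinv] at he2
    rcases Nat.lt_or_ge (j + 1) n with h | h
    · exact ⟨j + 1, h, he2 ▸ Sym2.mem_mk_right _ _⟩
    · have hjn : j + 1 = n := by omega
      refine ⟨0, by omega, ?_⟩
      have hz0 : z (j + 1) = z 0 := by rw [hjn, hzc]
      rw [he2, hz0]
      exact Sym2.mem_mk_right _ _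
  have hsub : ∀ e ∈ N, ∀ v ∈ e, v ∈ sat M := by
    rintro e (⟨heM, -⟩ | ⟨i, hi, rfl⟩) v hv
    · exact ⟨e, heM, hv⟩
    · rcases Sym2.mem_iff.mp hv with rfl | rfl
      · exact hsatz i (le_of_lt hi)
      · exact ⟨s(z (i + 1), P (z (i + 1))), hMz (i + 1) (by omega), Sym2.mem_mk_right _ _⟩
  have hcov : ∀ i < n, ∃ j, j < n ∧ P (z i) ∈ s(z j, P (z (j + 1))) := by
    intro i hi
    rcases Nat.eq_zero_or_pos i with rfl | hpos
    · refine ⟨n - 1, by omega, ?_⟩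
      have h1 : (n - 1) + 1 = n := by omega
      rw [h1, hzc]
      exact Sym2.mem_mk_right _ _
    · refine ⟨i - 1, by omega, ?_⟩
      have h1 : (i - 1) + 1 = i := by omega
      rw [h1]
      exact Sym2.mem_mk_right _ _
  have hsatN : sat N = sat M := by
    ext v
    constructor
    · rintro ⟨e, heN, hve⟩
      exact hsub e heN v hve
    · rintro ⟨e, heM, hve⟩
      by_cases hz : ∃ i, i < n ∧ z i ∈ e
      · obtain ⟨i, hi, hzi⟩ := hz
        have he : e = s(z i, P (z i)) := edge_eq hM heM hzi
        rw [he] at hve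
        rcases Sym2.mem_iff.mp hve with rfl | rfl
        · exact ⟨s(z i, P (z (i + 1))), hnewN i hi, Sym2.mem_mk_left _ _⟩
        · obtain ⟨j, hj, hmem⟩ := hcov i hi
          exact ⟨s(z j, P (z (j + 1))), hnewN j hj, hmem⟩
      · push_neg at hz
        exact ⟨e, Or.inl ⟨heM, hz⟩, hve⟩
  have hNmatch : IsMatchingIn G N := by
    constructor
    · rintro e (⟨heM, -⟩ | ⟨i, hi, rfl⟩)
      · exact hM.1 heM
      · exact (harcd i hi).2.2.2.2.1
    · rintro e heN f hfN hef v ⟨hve, hvf⟩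
      apply hef
      rcases heN with ⟨heM, hez⟩ | ⟨i, hi, rfl⟩ <;>
        rcases hfN with ⟨hfM, hfz⟩ | ⟨j, hj, rfl⟩
      · exact matching_eq hM heM hfM hve hvf
      · exfalso
        rcases Sym2.mem_iff.mp hvf with rfl | rfl
        · exact hez j hj hve
        · obtain ⟨i, hi, hzi⟩ := holdP e heM j hj hve
          exact hez i hi hzi
      · exfalso
        rcases Sym2.mem_iff.mp hve with rfl | rfl
        · exact hfz i hi hvf
        · obtain ⟨j, hj, hzj⟩ := holdP f hfM i hi hvf
          exact hfz j hj hzj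
      · rcases Sym2.mem_iff.mp hve with h1 | h1 <;> rcases Sym2.mem_iff.mp hvf with h2 | h2
        · have : i = j := hinj i j hi hj (h1.symm.trans h2)
          rw [this]
        · exfalso
          apply hPXz (j + 1) (by omega)
          rw [← h2, h1]
          exact hXz i (le_of_lt hi)
        · exfalso
          apply hPXz (i + 1) (by omega)
          rw [← h1, h2]
          exact hXz j (le_of_lt hj)
        · have : i = j := hPinj i j hi hj (h1.symm.trans h2)
          rw [this]
  have hne : N ≠ M := by
    intro h
    have h0 := hnewN 0 (by omega)
    rw [h] at h0
    exact (harcd 0 (by omega)).2.2.2.2.2 h0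
  exact hne (hUR.2 N hNmatch hsub hsatN)

lemma acyclic_to_ur [Fintype V] (G : SimpleGraph V) (X : Set V) (M : Set (Sym2 V))
    (hbip : ∀ v w, G.Adj v w → (v ∈ X ↔ w ∉ X)) (hM : IsMatchingIn G M)
    (hac : ∀ x, ¬ Relation.TransGen (DArc G M X) x x) :
    UniquelyRestricted G M := by
  classical
  refine ⟨hM, ?_⟩
  intro N hN hNsat hsatN
  by_contra hne
  -- there is an edge in N \ M
  have hex : ∃ e, e ∈ N ∧ e ∉ M := by
    by_contra h
    push_neg at h
    apply hne
    apply Set.Subset.antisymm h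
    intro e heM
    have hv : e.out.1 ∈ e := Sym2.out_fst_mem e
    have hsatM : e.out.1 ∈ sat M := ⟨e, heM, hv⟩
    have hsatN' : e.out.1 ∈ sat N := by rw [hsatN]; exact hsatM
    obtain ⟨f, hfN, hvf⟩ := hsatN'
    have : f = e := matching_eq hM (h f hfN) heM hvf hv
    rwa [← this]
  -- initial vertex with an N \ M edge, in X
  have hPred0 : ∃ x, x ∈ X ∧ ∃ y, s(x, y) ∈ N ∧ s(x, y) ∉ M := by
    obtain ⟨e, heN, heM⟩ := hex
    obtain ⟨b, heq⟩ := Sym2.mem_iff_exists.mp (Sym2.out_fst_mem e)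
    rw [heq] at heN heM
    have hadj : G.Adj e.out.1 b := G.mem_edgeSet.mp (hN.1 heN)
    by_cases hX : e.out.1 ∈ X
    · exact ⟨e.out.1, hX, b, heN, heM⟩
    · have hbX : b ∈ X := not_not.mp (fun hb => hX ((hbip _ b hadj).mpr hb))
      rw [Sym2.eq_swap] at heN heM
      exact ⟨b, hbX, e.out.1, heN, heM⟩
  -- the step lemma
  have step : ∀ x, (x ∈ X ∧ ∃ y, s(x, y) ∈ N ∧ s(x, y) ∉ M) →
      ∃ x', DArc G M X x x' ∧ (x' ∈ X ∧ ∃ w, s(x', w) ∈ N ∧ s(x', w) ∉ M) := by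
    rintro x ⟨hxX, y, hyN, hyM⟩
    have hyE : s(x, y) ∈ G.edgeSet := hN.1 hyN
    have hynX : y ∉ X := (hbip x y (G.mem_edgeSet.mp hyE)).mp hxX
    have hysat : y ∈ sat M := hNsat _ hyN y (Sym2.mem_mk_right x y)
    have hyM' : s(y, PartnerFn M y) ∈ M := partner_mem hM hysat
    have hx'M : s(PartnerFn M y, y) ∈ M := by rw [Sym2.eq_swap]; exact hyM'
    have hx'X : PartnerFn M y ∈ X := by
      have hadj : G.Adj (PartnerFn M y) y := G.mem_edgeSet.mp (hM.1 hx'M)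
      exact (hbip _ y hadj).mpr hynX
    have hxx' : x ≠ PartnerFn M y := by
      rintro heq
      rw [← heq] at hx'M
      exact hyM hx'M
    have hxsat : x ∈ sat M := hNsat _ hyN x (Sym2.mem_mk_left x y)
    have harc : DArc G M X x (PartnerFn M y) :=
      ⟨hxX, hx'X, hxx', sat_iff.mp hxsat, y, hx'M, hyE, hyM⟩
    have hx'satM : PartnerFn M y ∈ sat M := ⟨_, hx'M, Sym2.mem_mk_left _ _⟩
    have hx'satN : PartnerFn M y ∈ sat N := by rw [hsatN]; exact hx'satM
    obtain ⟨w, hwN⟩ := sat_iff.mp hx'satN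
    refine ⟨PartnerFn M y, harc, hx'X, w, hwN, ?_⟩
    intro hwM
    have hwy : w = y := by
      have h1 : PartnerFn M (PartnerFn M y) = y := partner_invol hM hysat
      have h2 : PartnerFn M (PartnerFn M y) = w := partner_spec hM hwM
      rw [← h1, h2]
    subst hwy
    exact hxx' (partner_unique_left hN hyN hwN)
  -- build the infinite walk
  obtain ⟨x₀, hP0⟩ := hPred0
  set g : ℕ → V := fun n => Nat.rec x₀ (fun _ prev =>
    if h : (prev ∈ X ∧ ∃ y, s(prev, y) ∈ N ∧ s(prev, y) ∉ M)
    then (step prev h).choose else prev) n with hgdef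
  have hg0 : g 0 = x₀ := rfl
  have hgsucc : ∀ n, g (n + 1) =
      if h : (g n ∈ X ∧ ∃ y, s(g n, y) ∈ N ∧ s(g n, y) ∉ M)
      then (step (g n) h).choose else g n := fun n => rfl
  have hstep : ∀ n, (g n ∈ X ∧ ∃ y, s(g n, y) ∈ N ∧ s(g n, y) ∉ M) →
      ((g (n + 1) ∈ X ∧ ∃ y, s(g (n + 1), y) ∈ N ∧ s(g (n + 1), y) ∉ M) ∧
        DArc G M X (g n) (g (n + 1))) := by
    intro n h
    have hg : g (n + 1) = (step (g n) h).choose := by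
      rw [hgsucc n, dif_pos h]
    rw [hg]
    exact ⟨(step (g n) h).choose_spec.2, (step (g n) h).choose_spec.1⟩
  have hPred : ∀ n, g n ∈ X ∧ ∃ y, s(g n, y) ∈ N ∧ s(g n, y) ∉ M := by
    intro n
    induction n with
    | zero => exact hP0
    | succ n ih => exact (hstep n ih).1
  have hArc : ∀ n, DArc G M X (g n) (g (n + 1)) := fun n => (hstep n (hPred n)).2
  have htg : ∀ i j, i < j → Relation.TransGen (DArc G M X) (g i) (g j) := by
    intro i j hij
    induction j with
    | zero => omega
    | succ j ih =>
      rcases Nat.lt_or_ge i j with h | h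
      · exact (ih h).tail (hArc j)
      · have : i = j := by omega
        rw [this]
        exact Relation.TransGen.single (hArc j)
  obtain ⟨i, j, hij, heq⟩ := Finite.exists_ne_map_eq_of_infinite g
  rcases Ne.lt_or_gt hij with h | h
  · have := htg i j h
    rw [heq] at this
    exact hac (g j) this
  · have := htg j i h
    rw [← heq] at this
    exact hac (g i) this

/-- for a bipartite `G`, a matching `M` is uniquely restricted iff the
digraph `D(G,M)` is acyclic. -/
theorem stmt2 [Fintype V] (G : SimpleGraph V) (X : Set V) (M : Set (Sym2 V))
    (hbip : ∀ v w, G.Adj v w → (v ∈ X ↔ w ∉ X)) (hM : IsMatchingIn G M) :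
    UniquelyRestricted G M ↔ ∀ x, ¬ Relation.TransGen (DArc G M X) x x := by
  exact ⟨ur_to_acyclic G X M hbip hM, acyclic_to_ur G X M hbip hM⟩
end

section
/- A perfect matching M of a bipartite graph G on n vertices is the unique perfect matching of G if and only if D(G,M) is acyclic (equivalently, |V(D(G,M))| = n/2 and D(G,M) has no directed cycle). -/
open SimpleGraph

variable {V : Type*}

/-!
Perfect matchings are handled through their partner functions. If `N ≠ M` are perfect matchings
with partner functions `q` and `p`, then `x ↦ p (q x)` maps the vertices of `X` where they differ
to such vertices along arcs of `D(G,M)`, so by finiteness it runs into a directed cycle.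
Conversely, a directed cycle yields a permutation `σ` of `X` moving each point of its support
along an arc; then `x ↦ p (σ x)` on `X`, with its inverse on the other side, is the partner
function of a perfect matching that uses the non-`M` edges `x — p (σ x)`.
-/

open Function Set Relation

theorem Function.exists_iterate_mem_periodicPts {α : Type*} [Finite α] (f : α → α) (x : α) :
    ∃ n, f^[n] x ∈ periodicPts f := by
  obtain ⟨i, j, hij, heq⟩ := Finite.exists_ne_map_eq_of_infinite fun n => f^[n] x
  wlog hlt : i < j generalizing i j
  · exact this j i hij.symm heq.symm (lt_of_le_of_ne (not_lt.mp hlt) hij.symm)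
  refine ⟨i, j - i, by omega, ?_⟩
  change f^[j - i] (f^[i] x) = f^[i] x
  rw [← iterate_add_apply, Nat.sub_add_cancel hlt.le]
  exact heq.symm

namespace Relation

variable {α : Type*} {r : α → α → Prop}

theorem transGen_iterate_succ {f : α → α} {S : Set α} (hS : MapsTo f S S)
    (hr : ∀ x ∈ S, r x (f x)) {x : α} (hx : x ∈ S) : ∀ k, TransGen r x (f^[k + 1] x)
  | 0 => .single (hr x hx)
  | k + 1 => by
    rw [iterate_succ_apply']
    exact (transGen_iterate_succ hS hr hx k).tail (hr _ (hS.iterate _ hx))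

theorem exists_transGen_self_of_mapsTo [Finite α] {f : α → α} {S : Set α} (hne : S.Nonempty)
    (hS : MapsTo f S S) (hr : ∀ x ∈ S, r x (f x)) : ∃ x, TransGen r x x := by
  obtain ⟨x, hx⟩ := hne
  obtain ⟨n, hper⟩ := f.exists_iterate_mem_periodicPts x
  have hcycle := transGen_iterate_succ hS hr (hS.iterate n hx) (minimalPeriod f (f^[n] x) - 1)
  rw [Nat.sub_add_cancel (minimalPeriod_pos_of_mem_periodicPts hper), iterate_minimalPeriod]
    at hcycle
  exact ⟨_, hcycle⟩

/-- The permutation `σ` encodes disjoint simple `r`-cycles covering `C`. -/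
theorem exists_perm_of_transGen_self [Finite α] {x : α} (h : TransGen r x x) :
    ∃ (σ : Equiv.Perm α) (C : Set α),
      C.Nonempty ∧ (∀ v ∉ C, σ v = v) ∧ ∀ v ∈ C, r v (σ v) := by
  classical
  have hstep : ∀ y, ∃ z, TransGen r z z ∧ (TransGen r y y → r y z) := by
    intro y
    by_cases hy : TransGen r y y
    · obtain ⟨z, hyz, hzy⟩ := TransGen.head'_iff.mp hy
      exact ⟨z, TransGen.tail' hzy hyz, fun _ => hyz⟩
    · exact ⟨x, h, fun h' => absurd h' hy⟩
  choose f hfS hfr using hstep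
  -- every periodic point of `f` is a value of `f`, hence lies on an `r`-cycle
  have hper : ∀ v ∈ periodicPts f, TransGen r v v := by
    intro v hv
    have hv' := iterate_minimalPeriod (f := f) (x := v)
    rw [← Nat.sub_add_cancel (minimalPeriod_pos_of_mem_periodicPts hv), iterate_succ_apply']
      at hv'
    exact hv' ▸ hfS _
  obtain ⟨n, hn⟩ := f.exists_iterate_mem_periodicPts x
  refine ⟨Equiv.Perm.ofSubtype ((bijOn_periodicPts (f := f)).equiv f), periodicPts f, ⟨_, hn⟩,
    fun v hv => Equiv.Perm.ofSubtype_apply_of_not_mem _ hv, fun v hv => ?_⟩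
  rw [Equiv.Perm.ofSubtype_apply_of_mem _ hv]
  exact hfr v (hper v hv)

end Relation

section Matching

variable {G : SimpleGraph V} {M N : Set (Sym2 V)} {p q : V → V}

theorem IsMatchingIn.exists_partner (hM : IsMatchingIn G M) (hperf : sat M = univ) :
    ∃ p : V → V, ∀ v w, s(v, w) ∈ M ↔ w = p v := by
  have hsat : ∀ v, ∃ w, s(v, w) ∈ M := by
    intro v
    obtain ⟨e, he, hve⟩ : v ∈ sat M := hperf ▸ mem_univ v
    induction e using Sym2.ind with
    | _ a b =>
      rcases Sym2.mem_iff.mp hve with rfl | rfl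
      · exact ⟨b, he⟩
      · exact ⟨a, Sym2.eq_swap ▸ he⟩
  choose p hp using hsat
  refine ⟨p, fun v w => ⟨fun hw => ?_, fun hw => hw ▸ hp v⟩⟩
  by_contra hne
  exact hM.2 _ hw _ (hp v) (mt Sym2.congr_right.mp hne) v
    ⟨Sym2.mem_mk_left v w, Sym2.mem_mk_left v (p v)⟩

theorem involutive_of_partner (hp : ∀ v w, s(v, w) ∈ M ↔ w = p v) : Involutive p :=
  fun v => ((hp (p v) v).mp (Sym2.eq_swap ▸ (hp v (p v)).mpr rfl)).symm

theorem eq_of_same_partner (hM : ∀ v w, s(v, w) ∈ M ↔ w = p v)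
    (hN : ∀ v w, s(v, w) ∈ N ↔ w = p v) : M = N := by
  ext e
  induction e using Sym2.ind with
  | _ v w => rw [hM, hN]

theorem isMatchingIn_range_of_involutive (hq : Involutive q) (hadj : ∀ v, G.Adj v (q v)) :
    IsMatchingIn G (range fun v => s(v, q v)) := by
  have hedge : ∀ a v, v ∈ s(a, q a) → s(a, q a) = s(v, q v) := by
    intro a v hv
    rcases Sym2.mem_iff.mp hv with rfl | rfl
    · rfl
    · rw [hq a, Sym2.eq_swap]
  refine ⟨?_, ?_⟩
  · rintro _ ⟨v, rfl⟩
    exact hadj v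
  · rintro _ ⟨a, rfl⟩ _ ⟨b, rfl⟩ hne v ⟨ha, hb⟩
    exact hne ((hedge a v ha).trans (hedge b v hb).symm)

theorem sat_range_sym2_mk (q : V → V) : sat (range fun v => s(v, q v)) = univ :=
  eq_univ_of_forall fun v => ⟨_, mem_range_self v, Sym2.mem_mk_left v (q v)⟩

end Matching

section Rotation

variable {G : SimpleGraph V} {X : Set V} {p : V → V} {σ : Equiv.Perm V}

/-- For the partner function `p` of `M`, this is the partner function of `M` switched along the
`M`-alternating cycles `x, p (σ x), σ x, …` traced out by `σ` on `X`. -/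
noncomputable def rotatePartner (X : Set V) (p : V → V) (σ : Equiv.Perm V) : V → V :=
  open Classical in fun v => if v ∈ X then p (σ v) else σ.symm (p v)

theorem rotatePartner_of_mem {v : V} (hv : v ∈ X) : rotatePartner X p σ v = p (σ v) := by
  simp [rotatePartner, hv]

theorem rotatePartner_of_not_mem {v : V} (hv : v ∉ X) :
    rotatePartner X p σ v = σ.symm (p v) := by
  simp [rotatePartner, hv]

theorem symm_apply_mem_of_not_mem (hpX : ∀ v, p v ∈ X ↔ v ∉ X) (hσX : ∀ v, σ v ∈ X ↔ v ∈ X)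
    {v : V} (hv : v ∉ X) : σ.symm (p v) ∈ X := by
  rw [← hσX, σ.apply_symm_apply, hpX]
  exact hv

theorem involutive_rotatePartner (hp : Involutive p) (hpX : ∀ v, p v ∈ X ↔ v ∉ X)
    (hσX : ∀ v, σ v ∈ X ↔ v ∈ X) : Involutive (rotatePartner X p σ) := by
  intro v
  by_cases hv : v ∈ X
  · have hpσv : p (σ v) ∉ X := fun h => (hpX _).mp h ((hσX v).mpr hv)
    rw [rotatePartner_of_mem hv, rotatePartner_of_not_mem hpσv, hp, σ.symm_apply_apply]
  · rw [rotatePartner_of_not_mem hv, rotatePartner_of_mem (symm_apply_mem_of_not_mem hpX hσX hv),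
      σ.apply_symm_apply, hp]

theorem adj_rotatePartner (hp : Involutive p) (hpX : ∀ v, p v ∈ X ↔ v ∉ X)
    (hσX : ∀ v, σ v ∈ X ↔ v ∈ X) (hadj : ∀ v ∈ X, G.Adj v (p (σ v))) (v : V) :
    G.Adj v (rotatePartner X p σ v) := by
  by_cases hv : v ∈ X
  · rw [rotatePartner_of_mem hv]
    exact hadj v hv
  · have hback := hadj _ (symm_apply_mem_of_not_mem hpX hσX hv)
    rw [σ.apply_symm_apply, hp] at hback
    rw [rotatePartner_of_not_mem hv]
    exact hback.symm

end Rotation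

section Bipartite

variable {G : SimpleGraph V} {X : Set V} {M N : Set (Sym2 V)} {p q : V → V}

theorem dArc_comp_partner_of_ne (hbip : ∀ v w, G.Adj v w → (v ∈ X ↔ w ∉ X))
    (hp : ∀ v w, s(v, w) ∈ M ↔ w = p v) (hpadj : ∀ v, G.Adj v (p v))
    (hq : ∀ v w, s(v, w) ∈ N ↔ w = q v) (hqadj : ∀ v, G.Adj v (q v))
    {x : V} (hxX : x ∈ X) (hx : q x ≠ p x) :
    DArc G M X x (p (q x)) ∧ q (p (q x)) ≠ p (p (q x)) := by
  have hpi := involutive_of_partner hp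
  have hqx : q x ∉ X := (hbip x (q x) (hqadj x)).mp hxX
  have hpqx : p (q x) ∈ X := (hbip _ _ (hpadj (q x)).symm).mpr hqx
  have hfix : x ≠ p (q x) := fun h => hx ((congrArg p h).trans (hpi _)).symm
  refine ⟨⟨hxX, hpqx, hfix, ⟨p x, (hp _ _).mpr rfl⟩, q x, (hp _ _).mpr (hpi _).symm,
    hqadj x, fun h => hx ((hp _ _).mp h)⟩, ?_⟩
  rw [hpi]
  exact fun h => hfix ((involutive_of_partner hq).injective h).symm

theorem exists_transGen_dArc_of_partner_ne [Finite V]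
    (hbip : ∀ v w, G.Adj v w → (v ∈ X ↔ w ∉ X))
    (hp : ∀ v w, s(v, w) ∈ M ↔ w = p v) (hpadj : ∀ v, G.Adj v (p v))
    (hq : ∀ v w, s(v, w) ∈ N ↔ w = q v) (hqadj : ∀ v, G.Adj v (q v)) (hne : q ≠ p) :
    ∃ x, TransGen (DArc G M X) x x := by
  have hstep (x : V) (hx : x ∈ X ∧ q x ≠ p x) :=
    dArc_comp_partner_of_ne hbip hp hpadj hq hqadj hx.1 hx.2
  obtain ⟨v, hv⟩ := Function.ne_iff.mp hne
  refine exists_transGen_self_of_mapsTo (S := {x | x ∈ X ∧ q x ≠ p x}) (f := p ∘ q) ?_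
    (fun x hx => ⟨(hstep x hx).1.2.1, (hstep x hx).2⟩) (fun x hx => (hstep x hx).1)
  by_cases hvX : v ∈ X
  · exact ⟨v, hvX, hv⟩
  · have hqv : q v ∈ X := not_not.mp (mt (hbip v (q v) (hqadj v)).mpr hvX)
    refine ⟨q v, hqv, fun h => hv ?_⟩
    rw [involutive_of_partner hq] at h
    exact ((congrArg p h).trans (involutive_of_partner hp _)).symm

theorem exists_perfect_matching_ne_of_transGen_dArc [Finite V]
    (hbip : ∀ v w, G.Adj v w → (v ∈ X ↔ w ∉ X))
    (hp : ∀ v w, s(v, w) ∈ M ↔ w = p v) (hpadj : ∀ v, G.Adj v (p v)) {x : V}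
    (hx : TransGen (DArc G M X) x x) :
    ∃ N, IsMatchingIn G N ∧ sat N = univ ∧ N ≠ M := by
  obtain ⟨σ, C, ⟨c, hc⟩, hfix, harc⟩ := exists_perm_of_transGen_self hx
  have hpi := involutive_of_partner hp
  have hpX : ∀ v, p v ∈ X ↔ v ∉ X := fun v => hbip _ _ (hpadj v).symm
  have hσX : ∀ v, σ v ∈ X ↔ v ∈ X := by
    intro v
    by_cases hv : v ∈ C
    · exact iff_of_true (harc v hv).2.1 (harc v hv).1
    · rw [hfix v hv]
  have hadj : ∀ v ∈ X, G.Adj v (p (σ v)) := by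
    intro v _
    by_cases hv : v ∈ C
    · obtain ⟨-, -, -, -, y, hyM, hyE, -⟩ := harc v hv
      exact (hp _ _).mp hyM ▸ hyE
    · rw [hfix v hv]
      exact hpadj v
  refine ⟨_, isMatchingIn_range_of_involutive (involutive_rotatePartner hpi hpX hσX)
    (adj_rotatePartner hpi hpX hσX hadj), sat_range_sym2_mk _, fun hNM => ?_⟩
  obtain ⟨hcX, -, -, -, y, hyM, -, hyN⟩ := harc c hc
  rw [(hp _ _).mp hyM] at hyN
  have hcN : s(c, p (σ c)) ∈ range fun v => s(v, rotatePartner X p σ v) :=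
    ⟨c, congrArg (s(c, ·)) (rotatePartner_of_mem hcX)⟩
  exact hyN (hNM ▸ hcN)

end Bipartite

/-- a perfect matching `M` of a bipartite graph `G` is the unique
perfect matching of `G` iff `D(G,M)` is acyclic. -/
theorem stmt5 [Fintype V] (G : SimpleGraph V) (X : Set V) (M : Set (Sym2 V))
    (hbip : ∀ v w, G.Adj v w → (v ∈ X ↔ w ∉ X)) (hM : IsMatchingIn G M)
    (hperf : sat M = Set.univ) :
    (∀ N : Set (Sym2 V), IsMatchingIn G N → sat N = Set.univ → N = M) ↔
      ∀ x, ¬ Relation.TransGen (DArc G M X) x x := by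
  obtain ⟨p, hp⟩ := hM.exists_partner hperf
  have hpadj : ∀ v, G.Adj v (p v) := fun v => hM.1 ((hp v _).mpr rfl)
  constructor
  · intro huniq x hx
    obtain ⟨N, hN, hNsat, hne⟩ := exists_perfect_matching_ne_of_transGen_dArc hbip hp hpadj hx
    exact hne (huniq N hN hNsat)
  · intro hacyc N hN hNsat
    obtain ⟨q, hq⟩ := hN.exists_partner hNsat
    by_contra hne
    obtain ⟨x, hx⟩ := exists_transGen_dArc_of_partner_ne hbip hp hpadj hq
      (fun v => hN.1 ((hq v _).mpr rfl)) fun hqp => hne (eq_of_same_partner hq (hqp ▸ hp))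
    exact hacyc x hx
end

section
/- Let M be a perfect matching of a bipartite graph G. A subset S ⊆ M is a forcing set for M (i.e., M is the only perfect matching of G containing S) if and only if every directed cycle of D(G,M) passes through some vertex corresponding to an edge of S; equivalently, D(G,M) with the vertices corresponding to S deleted is acyclic. -/
open SimpleGraph

variable {V : Type*}

lemma matching_uniq {G : SimpleGraph V} {M : Set (Sym2 V)} (hM : IsMatchingIn G M)
    {e f : Sym2 V} {v : V} (he : e ∈ M) (hf : f ∈ M) (hve : v ∈ e) (hvf : v ∈ f) : e = f := by
  by_contra h
  exact hM.2 e he f hf h v ⟨hve, hvf⟩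

lemma matching_pu {G : SimpleGraph V} {M : Set (Sym2 V)} (hM : IsMatchingIn G M)
    {v a b : V} (ha : s(v, a) ∈ M) (hb : s(v, b) ∈ M) : a = b :=
  Sym2.congr_right.mp (matching_uniq hM ha hb (Sym2.mem_mk_left v a) (Sym2.mem_mk_left v b))

lemma sat_partner {M : Set (Sym2 V)} (hperf : sat M = Set.univ) (v : V) :
    ∃ w, s(v, w) ∈ M := by
  have hv : v ∈ sat M := hperf ▸ Set.mem_univ v
  obtain ⟨e, heM, hve⟩ := hv
  induction e using Sym2.ind with
  | _ a b =>
    rcases Sym2.mem_iff.mp hve with rfl | rfl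
    · exact ⟨b, heM⟩
    · exact ⟨a, by rwa [Sym2.eq_swap]⟩

lemma chain_transGen {α : Type*} {R : α → α → Prop} {f : ℕ → α}
    (h : ∀ n, R (f n) (f (n + 1))) : ∀ i j, i < j → Relation.TransGen R (f i) (f j) := by
  intro i j hij
  induction j, hij using Nat.le_induction with
  | base => exact .single (h i)
  | succ n hn ih => exact ih.tail (h n)

lemma transGen_exists {α : Type*} {R : α → α → Prop} {a b : α} (h : Relation.TransGen R a b) :
    ∃ n, 1 ≤ n ∧ ∃ g : ℕ → α, g 0 = a ∧ g n = b ∧ ∀ i < n, R (g i) (g (i + 1)) := by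
  induction h with
  | @single c hr =>
    refine ⟨1, le_refl _, fun i => if i = 0 then a else c, by simp, by simp, ?_⟩
    intro i hi
    interval_cases i
    simpa using hr
  | @tail b c h1 hr ih =>
    obtain ⟨n, hn, g, h0, hb, hc⟩ := ih
    refine ⟨n + 1, by omega, fun i => if i ≤ n then g i else c, by simp [h0], by simp, ?_⟩
    intro i hi
    rcases Nat.lt_or_ge i n with hlt | hge
    · simpa [Nat.le_of_lt hlt, Nat.succ_le_of_lt hlt] using hc i hlt
    · have : i = n := by omega
      subst this
      simpa [hb] using hr

/-- `S ⊆ M` is a forcing set for the perfect matching `M` iff `D(G,M)`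
becomes acyclic after deleting the vertices corresponding to edges of `S`. -/
theorem stmt6 [Fintype V] (G : SimpleGraph V) (X : Set V) (M S : Set (Sym2 V))
    (hbip : ∀ v w, G.Adj v w → (v ∈ X ↔ w ∉ X)) (hM : IsMatchingIn G M)
    (hperf : sat M = Set.univ) (hS : S ⊆ M) :
    (∀ N : Set (Sym2 V), IsMatchingIn G N → sat N = Set.univ → S ⊆ N → N = M) ↔
      ∀ x, ¬ Relation.TransGen
        (fun a b => DArc G M X a b ∧ ¬(∃ y, s(a, y) ∈ S) ∧ ¬(∃ y, s(b, y) ∈ S)) x x := by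
    classical
  set R : V → V → Prop :=
    fun a b => DArc G M X a b ∧ ¬(∃ y, s(a, y) ∈ S) ∧ ¬(∃ y, s(b, y) ∈ S) with hR
  constructor
  · -- forcing → acyclic
    intro hforce x hcyc
    obtain ⟨n₀, hn₀, g₀, hg₀0, hg₀n, hc₀⟩ := transGen_exists hcyc
    have hQ : ∃ m, 1 ≤ m ∧ ∃ (z : V) (g : ℕ → V),
        g 0 = z ∧ g m = z ∧ ∀ i < m, R (g i) (g (i + 1)) :=
      ⟨n₀, hn₀, x, g₀, hg₀0, hg₀n, hc₀⟩
    obtain ⟨m, ⟨hm1, z, g, hg0, hgm, hc⟩, hmin⟩ :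
        ∃ m, (1 ≤ m ∧ ∃ (z : V) (g : ℕ → V),
          g 0 = z ∧ g m = z ∧ ∀ i < m, R (g i) (g (i + 1))) ∧
          ∀ k < m, ¬(1 ≤ k ∧ ∃ (z : V) (g : ℕ → V),
            g 0 = z ∧ g k = z ∧ ∀ i < k, R (g i) (g (i + 1))) :=
      ⟨Nat.find hQ, Nat.find_spec hQ, fun k hk => Nat.find_min hQ hk⟩
    have hg0m : g m = g 0 := by rw [hg0, hgm]
    -- minimality gives injectivity on [0, m] except at the endpoints
    have hinj : ∀ a b, a < b → b ≤ m → g a = g b → a = 0 ∧ b = m := by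
      intro a b hab hbm hgab
      by_contra hcon
      push_neg at hcon
      have hlt : b - a < m := by
        rcases Nat.eq_zero_or_pos a with rfl | ha
        · have := hcon rfl; omega
        · omega
      apply hmin (b - a) hlt
      refine ⟨by omega, g a, fun t => g (a + t), rfl,
        by show g (a + (b - a)) = g a; rw [show a + (b - a) = b by omega, hgab], ?_⟩
      intro i hi
      exact hc (a + i) (by omega)
    have hinj' : ∀ a b, a ≤ m → b ≤ m → g a = g b →
        a = b ∨ (a = 0 ∧ b = m) ∨ (a = m ∧ b = 0) := by
      intro a b ha hb hab
      rcases lt_trichotomy a b with h | h | h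
      · exact Or.inr (Or.inl (hinj a b h hb hab))
      · exact Or.inl h
      · exact Or.inr (Or.inr ⟨(hinj b a h ha hab.symm).2, (hinj b a h ha hab.symm).1⟩)
    have harc : ∀ i < m, DArc G M X (g i) (g (i + 1)) := fun i hi => (hc i hi).1
    have hnoS : ∀ i < m, ¬∃ y, s(g i, y) ∈ S := fun i hi => (hc i hi).2.1
    have hX : ∀ i ≤ m, g i ∈ X := by
      intro i hi
      rcases Nat.lt_or_ge i m with h | h
      · exact (harc i h).1
      · have : i = m := by omega
        subst this
        rw [hg0m]
        exact (harc 0 (by omega)).1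
    -- the M-partner function
    have hpex : ∀ v : V, ∃ w, s(v, w) ∈ M := sat_partner hperf
    set p : V → V := fun v => (hpex v).choose with hpdef
    have hp : ∀ v, s(v, p v) ∈ M := fun v => (hpex v).choose_spec
    have hpinj : ∀ v w, p v = p w → v = w := by
      intro v w h
      have h1 := hp v
      rw [h] at h1
      exact Sym2.congr_left.mp
        (matching_uniq hM h1 (hp w) (Sym2.mem_mk_right v (p w)) (Sym2.mem_mk_right w (p w)))
    have hpnX : ∀ v, v ∈ X → p v ∉ X := fun v hv =>
      (hbip v (p v) (G.mem_edgeSet.mp (hM.1 (hp v)))).mp hv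
    have hedge : ∀ i < m, s(g i, p (g (i + 1))) ∈ G.edgeSet ∧ s(g i, p (g (i + 1))) ∉ M := by
      intro i hi
      obtain ⟨-, -, -, -, y, hyM, hyE, hyNM⟩ := harc i hi
      have : y = p (g (i + 1)) := matching_pu hM hyM (hp (g (i + 1)))
      subst this
      exact ⟨hyE, hyNM⟩
    -- the switched matching
    set D : Set (Sym2 V) := {e | ∃ i < m, g i ∈ e} with hDdef
    set A : Set (Sym2 V) := {e | ∃ i < m, e = s(g i, p (g (i + 1)))} with hAdef
    set N : Set (Sym2 V) := (M \ D) ∪ A with hNdef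
    have hmixed : ∀ e ∈ M, e ∉ D → ∀ i < m, ∀ v, v ∈ e → v ∈ s(g i, p (g (i + 1))) → False := by
      intro e heM heD i hi v hve hvf
      rcases Sym2.mem_iff.mp hvf with rfl | rfl
      · exact heD ⟨i, hi, hve⟩
      · have he : e = s(g (i + 1), p (g (i + 1))) :=
          matching_uniq hM heM (hp (g (i + 1))) hve (Sym2.mem_mk_right _ _)
        have hge : g (i + 1) ∈ e := he ▸ Sym2.mem_mk_left _ _
        rcases Nat.lt_or_ge (i + 1) m with h | h
        · exact heD ⟨i + 1, h, hge⟩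
        · have him : i + 1 = m := by omega
          refine heD ⟨0, by omega, ?_⟩
          rw [← hg0m, ← him]
          exact hge
    have hNmatch : IsMatchingIn G N := by
      constructor
      · rintro e (⟨heM, -⟩ | ⟨i, hi, rfl⟩)
        · exact hM.1 heM
        · exact (hedge i hi).1
      · rintro e he f hf hef v ⟨hve, hvf⟩
        rcases he with he | he <;> rcases hf with hf | hf
        · exact hM.2 e he.1 f hf.1 hef v ⟨hve, hvf⟩
        · obtain ⟨i, hi, rfl⟩ := hf
          exact hmixed e he.1 he.2 i hi v hve hvf
        · obtain ⟨i, hi, rfl⟩ := he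
          exact hmixed f hf.1 hf.2 i hi v hvf hve
        · obtain ⟨i, hi, rfl⟩ := he
          obtain ⟨j, hj, rfl⟩ := hf
          have hij : i ≠ j := fun h => hef (by rw [h])
          rcases Sym2.mem_iff.mp hve with rfl | rfl <;> rcases Sym2.mem_iff.mp hvf with h | h
          · have := hinj' i j (by omega) (by omega) h
            omega
          · exact hpnX (g (j + 1)) (hX (j + 1) (by omega))
              (by rw [← h]; exact hX i (by omega))
          · exact hpnX (g (i + 1)) (hX (i + 1) (by omega))
              (by rw [h]; exact hX j (by omega))
          · have := hinj' (i + 1) (j + 1) (by omega) (by omega) (hpinj _ _ h)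
            omega
    have hNsat : sat N = Set.univ := by
      apply Set.eq_univ_of_forall
      intro v
      by_cases hD : s(v, p v) ∈ D
      · obtain ⟨i, hi, hgi⟩ := hD
        rcases Sym2.mem_iff.mp hgi with h | h
        · exact ⟨s(g i, p (g (i + 1))), Or.inr ⟨i, hi, rfl⟩, h ▸ Sym2.mem_mk_left _ _⟩
        · have hgv : s(g i, v) ∈ M := by
            have h2 := hp v
            rw [← h] at h2
            rwa [Sym2.eq_swap] at h2
          have hv : v = p (g i) := matching_pu hM hgv (hp (g i))
          rcases Nat.eq_zero_or_pos i with rfl | hipos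
          · refine ⟨s(g (m - 1), p (g (m - 1 + 1))), Or.inr ⟨m - 1, by omega, rfl⟩, ?_⟩
            rw [show m - 1 + 1 = m by omega, hg0m, ← hv]
            exact Sym2.mem_mk_right _ _
          · refine ⟨s(g (i - 1), p (g (i - 1 + 1))), Or.inr ⟨i - 1, by omega, rfl⟩, ?_⟩
            rw [show i - 1 + 1 = i by omega, ← hv]
            exact Sym2.mem_mk_right _ _
      · exact ⟨s(v, p v), Or.inl ⟨hp v, hD⟩, Sym2.mem_mk_left _ _⟩
    have hSsub : S ⊆ N := by
      intro e heS
      left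
      refine ⟨hS heS, ?_⟩
      rintro ⟨i, hi, hgi⟩
      have he : e = s(g i, p (g i)) :=
        matching_uniq hM (hS heS) (hp (g i)) hgi (Sym2.mem_mk_left _ _)
      exact hnoS i hi ⟨p (g i), he ▸ heS⟩
    have h0 : s(g 0, p (g 1)) ∈ N := Or.inr ⟨0, by omega, rfl⟩
    rw [hforce N hNmatch hNsat hSsub] at h0
    exact (hedge 0 (by omega)).2 h0
  · -- acyclic → forcing
    intro hacyc N hN hNperf hSN
    by_contra hneq
    -- first get an edge of M not in N
    have hMN : ¬ M ⊆ N := by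
      intro hMN
      apply hneq
      apply Set.Subset.antisymm _ hMN
      intro f hf
      induction f using Sym2.ind with
      | _ a b =>
        obtain ⟨w, hw⟩ := sat_partner hperf a
        have : b = w := matching_pu hN hf (hMN hw)
        subst this
        exact hw
    obtain ⟨e, heM, heN⟩ := Set.not_subset.mp hMN
    -- get a starting X-vertex whose M-edge is not in N
    have hstart : ∃ x₀, x₀ ∈ X ∧ ∃ y, s(x₀, y) ∈ M ∧ s(x₀, y) ∉ N := by
      induction e using Sym2.ind with
      | _ a b =>
        have hadj : G.Adj a b := G.mem_edgeSet.mp (hM.1 heM)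
        by_cases haX : a ∈ X
        · exact ⟨a, haX, b, heM, heN⟩
        · refine ⟨b, ?_, a, by rwa [Sym2.eq_swap], by rwa [Sym2.eq_swap]⟩
          have := hbip b a hadj.symm
          tauto
    -- the key step: from each such vertex, an arc to another such vertex
    have step : ∀ x, (x ∈ X ∧ ∃ y, s(x, y) ∈ M ∧ s(x, y) ∉ N) →
        ∃ x', R x x' ∧ (x' ∈ X ∧ ∃ y, s(x', y) ∈ M ∧ s(x', y) ∉ N) := by
      rintro x ⟨hxX, y₀, hy₀M, hy₀N⟩
      obtain ⟨z, hzN⟩ := sat_partner hNperf x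
      have hzy : z ≠ y₀ := by rintro rfl; exact hy₀N hzN
      have hxzE : s(x, z) ∈ G.edgeSet := hN.1 hzN
      have hxzM : s(x, z) ∉ M := fun h => hzy (matching_pu hM h hy₀M)
      have hzX : z ∉ X := (hbip x z (G.mem_edgeSet.mp hxzE)).mp hxX
      obtain ⟨x', hx'M⟩ := sat_partner hperf z
      have hx'M' : s(x', z) ∈ M := by rwa [Sym2.eq_swap]
      have hx'X : x' ∈ X := by
        have hadj : G.Adj x' z := G.mem_edgeSet.mp (hM.1 hx'M')
        have := hbip x' z hadj
        tauto
      have hxx' : x ≠ x' := by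
        rintro rfl
        exact hxzM hx'M'
      have hx'N : s(x', z) ∉ N := by
        intro hx'N
        have hne : s(x, z) ≠ s(x', z) := fun h => hxx' (Sym2.congr_left.mp h)
        exact hN.2 _ hzN _ hx'N hne z ⟨Sym2.mem_mk_right x z, Sym2.mem_mk_right x' z⟩
      refine ⟨x', ⟨⟨hxX, hx'X, hxx', ⟨y₀, hy₀M⟩, z, hx'M', hxzE, hxzM⟩, ?_, ?_⟩,
        hx'X, z, hx'M', hx'N⟩
      · rintro ⟨y, hyS⟩
        have : y = y₀ := matching_pu hM (hS hyS) hy₀M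
        subst this
        exact hy₀N (hSN hyS)
      · rintro ⟨y, hyS⟩
        have : y = z := matching_pu hM (hS hyS) hx'M'
        subst this
        exact hx'N (hSN hyS)
    obtain ⟨x₀, hP0⟩ := hstart
    -- build an infinite R-chain
    let g : ℕ → {x : V // x ∈ X ∧ ∃ y, s(x, y) ∈ M ∧ s(x, y) ∉ N} := fun n =>
      Nat.rec ⟨x₀, hP0⟩ (fun _ q => ⟨(step q.1 q.2).choose, (step q.1 q.2).choose_spec.2⟩) n
    have hchain : ∀ n, R ((g n).1) ((g (n + 1)).1) := fun n =>
      (step ((g n).1) ((g n).2)).choose_spec.1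
    obtain ⟨i, j, hij, heq⟩ :=
      Finite.exists_ne_map_eq_of_infinite (fun n => (g n).1)
    rcases hij.lt_or_gt with h | h
    · have := chain_transGen (f := fun n => (g n).1) hchain i j h
      beta_reduce at this
      rw [heq] at this
      exact hacyc _ this
    · have := chain_transGen (f := fun n => (g n).1) hchain j i h
      beta_reduce at this
      rw [← heq] at this
      exact hacyc _ this
end
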